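/- Let S ⊆ [m] × [n] be a finite set such that the bipartite graph G_S is doubly chordal bipartite, and let C = A_1 × B_0 ∈ Int(S). Define recursively, for k ≥ 2, A_k = { i ∈ [m] : i ∉ A_{k−1} and there exists j ∈ B_{k−1} with (i,j) ∈ S }, and, for k ≥ 1, B_k = { j ∈ [n] : j ∉ B_{k−1} and there exists i ∈ A_k with (i,j) ∈ S }. Then the sets A_1, A_2, A_3, … are pairwise disjoint; consequently there exists K such that A_k = ∅ and B_k = ∅ for all k ≥ K. -/

import Mathlib

/-- A clique in `S ⊆ [m] × [n]` is a nonempty subset of `S` of the form `R × C`. -/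
def IsCliqueIn {m n : ℕ} (S D : Finset (Fin m × Fin n)) : Prop :=
  D.Nonempty ∧ D ⊆ S ∧ ∃ (R : Finset (Fin m)) (C : Finset (Fin n)), D = R ×ˢ C

/-- A maximal clique of `S`, i.e. an element of `Max(S)`. -/
def IsMaxCliqueIn {m n : ℕ} (S D : Finset (Fin m × Fin n)) : Prop :=
  IsCliqueIn S D ∧ ∀ E, IsCliqueIn S E → D ⊆ E → D = E

/-- A nonempty intersection of two distinct maximal cliques of `S`. -/
def IsPairIntersection {m n : ℕ} (S C : Finset (Fin m × Fin n)) : Prop :=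
  ∃ D E, IsMaxCliqueIn S D ∧ IsMaxCliqueIn S E ∧ D ≠ E ∧ C = D ∩ E ∧ C.Nonempty

/-- An element of `Int(S)`: a containment-maximal pairwise intersection of maximal cliques. -/
def IsMaxIntersection {m n : ℕ} (S C : Finset (Fin m × Fin n)) : Prop :=
  IsPairIntersection S C ∧ ∀ C', IsPairIntersection S C' → C ⊆ C' → C = C'

/-- The bipartite graph `G_S` on `[m] ⊔ [n]` with an edge `i ~ j` iff `(i,j) ∈ S`. -/
def graphOf {m n : ℕ} (S : Finset (Fin m × Fin n)) : SimpleGraph (Fin m ⊕ Fin n) :=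
  SimpleGraph.fromRel fun u v => ∃ p ∈ S, u = Sum.inl p.1 ∧ v = Sum.inr p.2

/-- The cycle graph on `ℓ` vertices. -/
def cycleGraph (ℓ : ℕ) : SimpleGraph (ZMod ℓ) :=
  SimpleGraph.fromRel fun u v => v = u + 1

/-- The double square graph: two 4-cycles glued along a common edge. -/
def doubleSquare : SimpleGraph (Fin 3 ⊕ Fin 3) :=
  SimpleGraph.fromRel fun u v =>
    (u, v) ∈ ([(Sum.inl 0, Sum.inr 0), (Sum.inl 0, Sum.inr 1), (Sum.inl 1, Sum.inr 0),
      (Sum.inl 1, Sum.inr 1), (Sum.inl 1, Sum.inr 2), (Sum.inl 2, Sum.inr 1),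
      (Sum.inl 2, Sum.inr 2)] : List ((Fin 3 ⊕ Fin 3) × (Fin 3 ⊕ Fin 3)))

/-- `G` contains an induced copy of `H`. -/
def HasInducedCopy {V W : Type*} (H : SimpleGraph V) (G : SimpleGraph W) : Prop :=
  ∃ f : V → W, Function.Injective f ∧ ∀ u v, H.Adj u v ↔ G.Adj (f u) (f v)

/-- A graph is doubly chordal bipartite if it has no induced cycle of length at least 6 and
no induced double square. -/
def DoublyChordalBipartite {V : Type*} (G : SimpleGraph V) : Prop :=
  (∀ ℓ : ℕ, 6 ≤ ℓ → ¬ HasInducedCopy (cycleGraph ℓ) G) ∧ ¬ HasInducedCopy doubleSquare G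

/-!
A row of `A (k + 1)` has all its neighbours in `B k ∪ B (k + 1)`, and a column of `B (k + 1)` all
its neighbours in `A (k + 1) ∪ A (k + 2)`. By induction on the distance `d`, disjointness of all
layers at distance `d` therefore reduces to `B 0 ∩ B d = ∅`. A column in `B 0 ∩ B 2` yields a path
`j₀ – i₂ – j₁ – i₁` leaving `A 1 ×ˢ B 0`; excluding induced double squares, this produces two
maximal cliques meeting in more than `A 1 ×ˢ B 0`, against its maximality in `Int(S)`. A column in
`B 0 ∩ B d` with `d ≥ 3` closes a path through the layers into an induced cycle of length `2 d`.
Finally, pairwise disjoint subsets of a finite set are eventually empty, and once `A K = ∅` all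
later layers are empty.
-/

variable {α β : Type*}

structure IsLayering (S : Finset (α × β)) (A : ℕ → Finset α) (B : ℕ → Finset β) : Prop where
  mem_A_succ {k : ℕ} (hk : 1 ≤ k) {i : α} : i ∈ A (k + 1) ↔ i ∉ A k ∧ ∃ j ∈ B k, (i, j) ∈ S
  mem_B_succ {k : ℕ} {j : β} : j ∈ B (k + 1) ↔ j ∉ B k ∧ ∃ i ∈ A (k + 1), (i, j) ∈ S

def LayersDisjointBelow (A : ℕ → Finset α) (B : ℕ → Finset β) (d : ℕ) : Prop :=
  ∀ k l, k < l → l < k + d → Disjoint (B k) (B l) ∧ Disjoint (A (k + 1)) (A (l + 1))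

namespace LayersDisjointBelow

variable {A : ℕ → Finset α} {B : ℕ → Finset β} {d : ℕ}

theorem eq_of_mem_B (h : LayersDisjointBelow A B d) {k l : ℕ} {j : β} (hk : j ∈ B k)
    (hl : j ∈ B l) (hkl : k < l + d) (hlk : l < k + d) : k = l := by
  by_contra hne
  rcases Nat.lt_or_gt_of_ne hne with hlt | hlt
  · exact Finset.disjoint_left.1 (h k l hlt hlk).1 hk hl
  · exact Finset.disjoint_left.1 (h l k hlt hkl).1 hl hk

theorem eq_of_mem_A (h : LayersDisjointBelow A B d) {k l : ℕ} {i : α} (hk₁ : 1 ≤ k)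
    (hl₁ : 1 ≤ l) (hk : i ∈ A k) (hl : i ∈ A l) (hkl : k < l + d) (hlk : l < k + d) : k = l := by
  obtain ⟨k, rfl⟩ := Nat.exists_eq_add_of_le' hk₁
  obtain ⟨l, rfl⟩ := Nat.exists_eq_add_of_le' hl₁
  by_contra hne
  rcases Nat.lt_or_gt_of_ne hne with hlt | hlt
  · exact Finset.disjoint_left.1 (h k l (by omega) (by omega)).2 hk hl
  · exact Finset.disjoint_left.1 (h l k (by omega) (by omega)).2 hl hk

end LayersDisjointBelow

namespace IsLayering

variable {S : Finset (α × β)} {A : ℕ → Finset α} {B : ℕ → Finset β}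

theorem mem_or_mem_B_of_mem_A (hL : IsLayering S A B) {k : ℕ} {i : α} {j : β}
    (hi : i ∈ A (k + 1)) (hij : (i, j) ∈ S) : j ∈ B k ∨ j ∈ B (k + 1) :=
  or_iff_not_imp_left.2 fun hj => hL.mem_B_succ.2 ⟨hj, i, hi, hij⟩

theorem mem_or_mem_A_of_mem_B (hL : IsLayering S A B) {k : ℕ} {i : α} {j : β}
    (hj : j ∈ B (k + 1)) (hij : (i, j) ∈ S) : i ∈ A (k + 1) ∨ i ∈ A (k + 2) :=
  or_iff_not_imp_left.2 fun hi => (hL.mem_A_succ (by omega)).2 ⟨hi, j, hj, hij⟩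

theorem disjoint_A_succ (hL : IsLayering S A B) {k l : ℕ} (hl : 1 ≤ l)
    (h : Disjoint (B k) (B l)) (h' : Disjoint (B (k + 1)) (B l)) :
    Disjoint (A (k + 1)) (A (l + 1)) := by
  refine Finset.disjoint_left.2 fun i hik hil => ?_
  obtain ⟨-, j, hjl, hij⟩ := (hL.mem_A_succ hl).1 hil
  rcases hL.mem_or_mem_B_of_mem_A hik hij with hjk | hjk
  · exact Finset.disjoint_left.1 h hjk hjl
  · exact Finset.disjoint_left.1 h' hjk hjl

theorem disjoint_B_succ (hL : IsLayering S A B) {k l : ℕ}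
    (h : Disjoint (A (k + 1)) (A (l + 1))) (h' : Disjoint (A (k + 2)) (A (l + 1))) :
    Disjoint (B (k + 1)) (B (l + 1)) := by
  refine Finset.disjoint_left.2 fun j hjk hjl => ?_
  obtain ⟨-, i, hil, hij⟩ := hL.mem_B_succ.1 hjl
  rcases hL.mem_or_mem_A_of_mem_B hjk hij with hik | hik
  · exact Finset.disjoint_left.1 h hik hil
  · exact Finset.disjoint_left.1 h' hik hil

theorem layersDisjointBelow_two (hL : IsLayering S A B) : LayersDisjointBelow A B 2 := by
  intro k l hkl hlk
  obtain rfl : l = k + 1 := by omega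
  exact ⟨Finset.disjoint_left.2 fun j hj hj' => (hL.mem_B_succ.1 hj').1 hj,
    Finset.disjoint_left.2 fun i hi hi' => ((hL.mem_A_succ (by omega)).1 hi').1 hi⟩

theorem layersDisjointBelow_succ (hL : IsLayering S A B) {d : ℕ} (hd : 2 ≤ d)
    (h : LayersDisjointBelow A B d) (h0 : Disjoint (B 0) (B d)) :
    LayersDisjointBelow A B (d + 1) := by
  have hdist : ∀ k, Disjoint (B k) (B (k + d)) ∧ Disjoint (A (k + 1)) (A (k + d + 1)) := by
    intro k
    induction k with
    | zero =>
      rw [Nat.zero_add]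
      exact ⟨h0, hL.disjoint_A_succ (by omega) h0 (h 1 d (by omega) (by omega)).1⟩
    | succ k ih =>
      have hB : Disjoint (B (k + 1)) (B (k + d + 1)) :=
        hL.disjoint_B_succ ih.2 (h (k + 1) (k + d) (by omega) (by omega)).2
      rw [Nat.add_right_comm]
      exact ⟨hB, hL.disjoint_A_succ (by omega) hB (h (k + 2) (k + d + 1) (by omega) (by omega)).1⟩
  intro k l hkl hlk
  rcases Nat.lt_or_ge l (k + d) with hl | hl
  · exact h k l hkl hl
  · obtain rfl : l = k + d := by omega
    exact hdist k

theorem disjoint_of_lt (hL : IsLayering S A B)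
    (h0 : ∀ d, 2 ≤ d → LayersDisjointBelow A B d → Disjoint (B 0) (B d)) {k l : ℕ}
    (hkl : k < l) : Disjoint (B k) (B l) ∧ Disjoint (A (k + 1)) (A (l + 1)) := by
  have hbelow : ∀ d, LayersDisjointBelow A B (d + 2) := by
    intro d
    induction d with
    | zero => exact hL.layersDisjointBelow_two
    | succ d ih => exact hL.layersDisjointBelow_succ (by omega) ih (h0 _ (by omega) ih)
  exact hbelow l k l hkl (by omega)

theorem exists_eventually_empty [Finite α] (hL : IsLayering S A B)
    (hA : ∀ k l, k < l → Disjoint (A (k + 1)) (A (l + 1))) :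
    ∃ K, ∀ k, K ≤ k → A k = ∅ ∧ B k = ∅ := by
  obtain ⟨x, y, hxy, hAxy⟩ := Finite.exists_ne_map_eq_of_infinite fun k => A (k + 1)
  have hx : A (x + 1) = ∅ := by
    rw [← Finset.disjoint_self_iff_empty]
    rcases Nat.lt_or_gt_of_ne hxy with h | h
    · simpa [hAxy] using hA x y h
    · simpa [hAxy] using (hA y x h).symm
  have hB_empty : ∀ k, A (k + 1) = ∅ → B (k + 1) = ∅ := fun k hk =>
    Finset.eq_empty_of_forall_notMem fun j hj => by simpa [hk] using hL.mem_B_succ.1 hj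
  refine ⟨x + 1, fun k hk => ?_⟩
  induction k, hk using Nat.le_induction with
  | base => exact ⟨hx, hB_empty x hx⟩
  | succ k hk ih =>
    have hA' : A (k + 1) = ∅ := Finset.eq_empty_of_forall_notMem fun i hi => by
      simpa [ih.2] using (hL.mem_A_succ (by omega)).1 hi
    exact ⟨hA', hB_empty k hA'⟩

theorem exists_path (hL : IsLayering S A B) {d : ℕ} (hd : 1 ≤ d) {j : β} (hj : j ∈ B d) :
    ∃ (I : ℕ → α) (J : ℕ → β), J d = j ∧ ∀ s, 1 ≤ s → s ≤ d →
      I s ∈ A s ∧ J s ∈ B s ∧ (I s, J s) ∈ S ∧ (s < d → (I (s + 1), J s) ∈ S) := by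
  induction d, hd using Nat.le_induction generalizing j with
  | base =>
    obtain ⟨-, i, hi, hij⟩ := hL.mem_B_succ.1 hj
    refine ⟨fun _ => i, fun _ => j, rfl, fun s hs hs' => ?_⟩
    obtain rfl : s = 1 := by omega
    exact ⟨hi, hj, hij, by omega⟩
  | succ d hd ih =>
    obtain ⟨-, i, hi, hij⟩ := hL.mem_B_succ.1 hj
    obtain ⟨-, j', hj', hij'⟩ := (hL.mem_A_succ hd).1 hi
    obtain ⟨I, J, rfl, hIJ⟩ := ih hj'
    refine ⟨Function.update I (d + 1) i, Function.update J (d + 1) j, by simp, fun s hs hs' => ?_⟩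
    rcases Nat.lt_or_ge s (d + 1) with hlt | hge
    · obtain ⟨hIs, hJs, hs_edge, hnext⟩ := hIJ s hs (by omega)
      simp only [Function.update_of_ne hlt.ne]
      refine ⟨hIs, hJs, hs_edge, fun _ => ?_⟩
      rcases Nat.lt_or_ge s d with hsd | hsd
      · rw [Function.update_of_ne (by omega)]
        exact hnext hsd
      · obtain rfl : s = d := by omega
        simpa using hij'
    · obtain rfl : s = d + 1 := by omega
      simp only [Function.update_self]
      exact ⟨hi, hj, hij, by omega⟩

end IsLayering

theorem ZMod.eq_add_one_iff_val {ℓ : ℕ} [NeZero ℓ] (u v : ZMod ℓ) :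
    v = u + 1 ↔ v.val = u.val + 1 ∨ (u.val + 1 = ℓ ∧ v.val = 0) := by
  have hu := u.val_lt
  have hv := v.val_lt
  have hval : (u + 1).val = (u.val + 1) % ℓ := by
    rw [← ZMod.val_natCast]
    push_cast [ZMod.natCast_zmod_val]
    rfl
  rw [← (ZMod.val_injective ℓ).eq_iff, hval]
  rcases Nat.lt_or_ge (u.val + 1) ℓ with h | h
  · rw [Nat.mod_eq_of_lt h]
    omega
  · obtain h : u.val + 1 = ℓ := by omega
    rw [h, Nat.mod_self]
    omega

theorem hasInducedCopy_cycleGraph {V : Type*} {G : SimpleGraph V} {ℓ : ℕ} [NeZero ℓ]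
    (w : ℕ → V) (hw : Set.InjOn w (Set.Iio ℓ))
    (hadj : ∀ x y, x < y → y < ℓ → (G.Adj (w x) (w y) ↔ y = x + 1 ∨ (x = 0 ∧ y + 1 = ℓ))) :
    HasInducedCopy (cycleGraph ℓ) G := by
  refine ⟨fun u => w u.val, fun u v huv => ZMod.val_injective ℓ (hw u.val_lt v.val_lt huv),
    fun u v => ?_⟩
  have hu := u.val_lt
  have hv := v.val_lt
  change _ ↔ G.Adj (w u.val) (w v.val)
  rw [cycleGraph, SimpleGraph.fromRel_adj, ZMod.eq_add_one_iff_val, ZMod.eq_add_one_iff_val,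
    ← (ZMod.val_injective ℓ).ne_iff]
  rcases lt_trichotomy u.val v.val with h | h | h
  · rw [hadj _ _ h hv]
    omega
  · simp [h]
  · rw [G.adj_comm, hadj _ _ h hu]
    omega

section GraphOf

variable {m n : ℕ} {S : Finset (Fin m × Fin n)}

theorem graphOf_adj_inl_inr {i : Fin m} {j : Fin n} :
    (graphOf S).Adj (Sum.inl i) (Sum.inr j) ↔ (i, j) ∈ S := by
  simp [graphOf, SimpleGraph.fromRel_adj]

theorem graphOf_adj_inr_inl {i : Fin m} {j : Fin n} :
    (graphOf S).Adj (Sum.inr j) (Sum.inl i) ↔ (i, j) ∈ S := by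
  simp [graphOf, SimpleGraph.fromRel_adj]

theorem graphOf_not_adj_inl_inl {i i' : Fin m} :
    ¬ (graphOf S).Adj (Sum.inl i) (Sum.inl i') := by
  simp [graphOf, SimpleGraph.fromRel_adj]

theorem graphOf_not_adj_inr_inr {j j' : Fin n} :
    ¬ (graphOf S).Adj (Sum.inr j) (Sum.inr j') := by
  simp [graphOf, SimpleGraph.fromRel_adj]

/-- The cycle visits `I 1, J 1, I 2, J 2, …, I d, J d`. -/
theorem hasInducedCopy_cycleGraph_graphOf {d : ℕ} (hd : 1 ≤ d) (I : ℕ → Fin m) (J : ℕ → Fin n)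
    (hI : Set.InjOn I (Set.Icc 1 d)) (hJ : Set.InjOn J (Set.Icc 1 d))
    (hS : ∀ s t, s ∈ Set.Icc 1 d → t ∈ Set.Icc 1 d →
      ((I s, J t) ∈ S ↔ t = s ∨ t + 1 = s ∨ (s = 1 ∧ t = d))) :
    HasInducedCopy (cycleGraph (2 * d)) (graphOf S) := by
  have : NeZero (2 * d) := ⟨by omega⟩
  set w : ℕ → Fin m ⊕ Fin n := fun x =>
    if Even x then Sum.inl (I (x / 2 + 1)) else Sum.inr (J (x / 2 + 1)) with hw
  have hw_even : ∀ a, w (2 * a) = Sum.inl (I (a + 1)) := fun a => by simp [hw]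
  have hw_odd : ∀ a, w (2 * a + 1) = Sum.inr (J (a + 1)) := fun a => by
    simp [hw, Nat.add_div_of_dvd_right]
  refine hasInducedCopy_cycleGraph w (fun x hx y hy hxy => ?_) fun x y hxy hy => ?_
  · simp only [Set.mem_Iio] at hx hy
    obtain ⟨a, rfl | rfl⟩ := Nat.even_or_odd' x <;> obtain ⟨b, rfl | rfl⟩ := Nat.even_or_odd' y <;>
      simp only [hw_even, hw_odd, Sum.inl.injEq, Sum.inr.injEq, reduceCtorEq] at hxy
    · have := hI ⟨by omega, by omega⟩ ⟨by omega, by omega⟩ hxy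
      omega
    · have := hJ ⟨by omega, by omega⟩ ⟨by omega, by omega⟩ hxy
      omega
  · obtain ⟨a, rfl | rfl⟩ := Nat.even_or_odd' x <;> obtain ⟨b, rfl | rfl⟩ := Nat.even_or_odd' y <;>
      simp only [hw_even, hw_odd, graphOf_not_adj_inl_inl, graphOf_not_adj_inr_inr,
        graphOf_adj_inl_inr, graphOf_adj_inr_inl, false_iff]
    · omega
    · rw [hS _ _ ⟨by omega, by omega⟩ ⟨by omega, by omega⟩]
      omega
    · rw [hS _ _ ⟨by omega, by omega⟩ ⟨by omega, by omega⟩]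
      omega
    · omega

end GraphOf

theorem Finset.left_subset_of_product_subset {α β : Type*} {s s' : Finset α} {t t' : Finset β}
    (h : s ×ˢ t ⊆ s' ×ˢ t') (ht : t.Nonempty) : s ⊆ s' := fun _ ha =>
  (Finset.mem_product.1 (h (Finset.mk_mem_product ha ht.choose_spec))).1

theorem Finset.right_subset_of_product_subset {α β : Type*} {s s' : Finset α} {t t' : Finset β}
    (h : s ×ˢ t ⊆ s' ×ˢ t') (hs : s.Nonempty) : t ⊆ t' := fun _ hb =>
  (Finset.mem_product.1 (h (Finset.mk_mem_product hs.choose_spec hb))).2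


section Cliques

variable {m n : ℕ} {S : Finset (Fin m × Fin n)}

theorem isCliqueIn_product {R : Finset (Fin m)} {C : Finset (Fin n)} (hR : R.Nonempty)
    (hC : C.Nonempty) (hRC : ∀ i ∈ R, ∀ j ∈ C, (i, j) ∈ S) : IsCliqueIn S (R ×ˢ C) :=
  ⟨hR.product hC, fun p hp => hRC p.1 (Finset.mem_product.1 hp).1 p.2 (Finset.mem_product.1 hp).2,
    R, C, rfl⟩

theorem IsCliqueIn.exists_isMaxCliqueIn_superset {D : Finset (Fin m × Fin n)}
    (hD : IsCliqueIn S D) : ∃ F, IsMaxCliqueIn S F ∧ D ⊆ F := by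
  obtain ⟨F, hDF, hF, hFmax⟩ := Finite.exists_le_maximal hD
  exact ⟨F, ⟨hF, fun E hE hFE => le_antisymm hFE (hFmax hE hFE)⟩, hDF⟩

theorem IsMaxCliqueIn.mem_rows_of_forall {R : Finset (Fin m)} {C : Finset (Fin n)}
    (hX : IsMaxCliqueIn S (R ×ˢ C)) (hC : C.Nonempty) {r : Fin m}
    (hr : ∀ j ∈ C, (r, j) ∈ S) : r ∈ R := by
  have hclique : IsCliqueIn S (insert r R ×ˢ C) := by
    refine isCliqueIn_product (Finset.insert_nonempty r R) hC fun i hi j hj => ?_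
    rcases Finset.mem_insert.1 hi with rfl | hi
    · exact hr j hj
    · exact hX.1.2.1 (Finset.mk_mem_product hi hj)
  have heq := hX.2 _ hclique (Finset.product_subset_product_left (Finset.subset_insert r R))
  obtain ⟨j, hj⟩ := hC
  have hrj : (r, j) ∈ R ×ˢ C := heq ▸ Finset.mk_mem_product (Finset.mem_insert_self r R) hj
  exact (Finset.mem_product.1 hrj).1

theorem IsMaxCliqueIn.mem_cols_of_forall {R : Finset (Fin m)} {C : Finset (Fin n)}
    (hX : IsMaxCliqueIn S (R ×ˢ C)) (hR : R.Nonempty) {c : Fin n}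
    (hc : ∀ i ∈ R, (i, c) ∈ S) : c ∈ C := by
  have hclique : IsCliqueIn S (R ×ˢ insert c C) := by
    refine isCliqueIn_product hR (Finset.insert_nonempty c C) fun i hi j hj => ?_
    rcases Finset.mem_insert.1 hj with rfl | hj
    · exact hc i hi
    · exact hX.1.2.1 (Finset.mk_mem_product hi hj)
  have heq := hX.2 _ hclique (Finset.product_subset_product_right (Finset.subset_insert c C))
  obtain ⟨i, hi⟩ := hR
  have hic : (i, c) ∈ R ×ˢ C := heq ▸ Finset.mk_mem_product hi (Finset.mem_insert_self c C)
  exact (Finset.mem_product.1 hic).2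

end Cliques

section DoubleSquare

variable {m n : ℕ} {S : Finset (Fin m × Fin n)}

def doubleSquarePattern (x y : Fin 3) : Prop :=
  (x, y) ∈ ([(0, 0), (0, 1), (1, 0), (1, 1), (1, 2), (2, 1), (2, 2)] : List (Fin 3 × Fin 3))

theorem doubleSquare_adj_inl_inr (x y : Fin 3) :
    doubleSquare.Adj (Sum.inl x) (Sum.inr y) ↔ doubleSquarePattern x y := by
  fin_cases x <;> fin_cases y <;> simp [doubleSquare, doubleSquarePattern, SimpleGraph.fromRel_adj]

theorem eq_of_doubleSquarePattern_row_iff (x x' : Fin 3)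
    (h : ∀ y, doubleSquarePattern x y ↔ doubleSquarePattern x' y) : x = x' := by
  revert x x'
  unfold doubleSquarePattern
  decide

theorem eq_of_doubleSquarePattern_col_iff (y y' : Fin 3)
    (h : ∀ x, doubleSquarePattern x y ↔ doubleSquarePattern x y') : y = y' := by
  revert y y'
  unfold doubleSquarePattern
  decide

theorem hasInducedCopy_doubleSquare {u₀ u₁ u₂ : Fin m} {v₀ v₁ v₂ : Fin n}
    (h₀₀ : (u₀, v₀) ∈ S) (h₀₁ : (u₀, v₁) ∈ S) (h₁₀ : (u₁, v₀) ∈ S) (h₁₁ : (u₁, v₁) ∈ S)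
    (h₁₂ : (u₁, v₂) ∈ S) (h₂₁ : (u₂, v₁) ∈ S) (h₂₂ : (u₂, v₂) ∈ S)
    (h₀₂ : (u₀, v₂) ∉ S) (h₂₀ : (u₂, v₀) ∉ S) :
    HasInducedCopy doubleSquare (graphOf S) := by
  set u : Fin 3 → Fin m := ![u₀, u₁, u₂]
  set v : Fin 3 → Fin n := ![v₀, v₁, v₂]
  have huv : ∀ x y, (u x, v y) ∈ S ↔ doubleSquarePattern x y := by
    intro x y
    fin_cases x <;> fin_cases y <;> simp [u, v, doubleSquarePattern, *]
  have hu : Function.Injective u := fun x x' h =>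
    eq_of_doubleSquarePattern_row_iff x x' fun y => by rw [← huv, ← huv, h]
  have hv : Function.Injective v := fun y y' h =>
    eq_of_doubleSquarePattern_col_iff y y' fun x => by rw [← huv, ← huv, h]
  refine ⟨Sum.map u v, Sum.map_injective.2 ⟨hu, hv⟩, ?_⟩
  rintro (x | x) (y | y)
  · simp [doubleSquare, SimpleGraph.fromRel_adj, graphOf_not_adj_inl_inl]
  · rw [Sum.map_inl, Sum.map_inr, graphOf_adj_inl_inr, huv, doubleSquare_adj_inl_inr]
  · rw [Sum.map_inl, Sum.map_inr, graphOf_adj_inr_inl, huv, doubleSquare.adj_comm,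
      doubleSquare_adj_inl_inr]
  · simp [doubleSquare, SimpleGraph.fromRel_adj, graphOf_not_adj_inr_inr]

end DoubleSquare

namespace IsMaxIntersection

variable {m n : ℕ} {S C : Finset (Fin m × Fin n)}

theorem nonempty (hC : IsMaxIntersection S C) : C.Nonempty := by
  obtain ⟨⟨-, -, -, -, -, -, hne⟩, -⟩ := hC
  exact hne

theorem subset (hC : IsMaxIntersection S C) : C ⊆ S := by
  obtain ⟨⟨D, E, hD, -, -, rfl, -⟩, -⟩ := hC
  exact Finset.inter_subset_left.trans hD.1.2.1

/-- A maximal clique `X` through `C ∈ Int(S)` meets every other clique through `C` inside `C`: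
otherwise a maximal clique containing that clique would intersect `X` in more than `C`. -/
theorem inter_subset (hC : IsMaxIntersection S C) {X Y : Finset (Fin m × Fin n)}
    (hX : IsMaxCliqueIn S X) (hCX : C ⊆ X) (hY : IsCliqueIn S Y) (hCY : C ⊆ Y)
    (hYX : ¬ Y ⊆ X) : X ∩ Y ⊆ C := by
  obtain ⟨F, hF, hYF⟩ := hY.exists_isMaxCliqueIn_superset
  have hXF : X ≠ F := by
    rintro rfl
    exact hYX hYF
  have hCXF : C ⊆ X ∩ F := Finset.subset_inter hCX (hCY.trans hYF)
  have hpair : IsPairIntersection S (X ∩ F) :=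
    ⟨X, F, hX, hF, hXF, rfl, hC.nonempty.mono hCXF⟩
  rw [hC.2 _ hpair hCXF]
  exact Finset.inter_subset_inter_left hYF

end IsMaxIntersection

namespace IsMaxIntersection

variable {m n : ℕ} {S : Finset (Fin m × Fin n)} {A₁ : Finset (Fin m)} {B₀ : Finset (Fin n)}
  {i₁ i₂ : Fin m} {j₀ j₁ : Fin n}

theorem exists_isMaxCliqueIn_notMem (hC : IsMaxIntersection S (A₁ ×ˢ B₀))
    {p : Fin m × Fin n} (hp : p ∉ A₁ ×ˢ B₀) :
    ∃ R C, IsMaxCliqueIn S (R ×ˢ C) ∧ A₁ ⊆ R ∧ B₀ ⊆ C ∧ p ∉ R ×ˢ C := by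
  obtain ⟨hA₁, hB₀⟩ := Finset.nonempty_product.1 hC.nonempty
  obtain ⟨X, hX, hCX, hpX⟩ : ∃ X, IsMaxCliqueIn S X ∧ A₁ ×ˢ B₀ ⊆ X ∧ p ∉ X := by
    obtain ⟨⟨D, E, hD, hE, -, hDE, -⟩, -⟩ := hC
    rw [hDE] at hp ⊢
    by_cases hpD : p ∈ D
    · exact ⟨E, hE, Finset.inter_subset_right, fun hpE => hp (Finset.mem_inter.2 ⟨hpD, hpE⟩)⟩
    · exact ⟨D, hD, Finset.inter_subset_left, hpD⟩
  obtain ⟨R, C, rfl⟩ := hX.1.2.2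
  exact ⟨R, C, hX, Finset.left_subset_of_product_subset hCX hB₀,
    Finset.right_subset_of_product_subset hCX hA₁, hpX⟩

theorem exists_row_notMem (hC : IsMaxIntersection S (A₁ ×ˢ B₀)) {j : Fin n} (hj : j ∉ B₀) :
    ∃ r, (∀ j' ∈ B₀, (r, j') ∈ S) ∧ (r, j) ∉ S := by
  obtain ⟨⟨i₁, hi₁⟩, -⟩ := Finset.nonempty_product.1 hC.nonempty
  obtain ⟨R, C, hX, hA₁R, hB₀C, hjX⟩ := hC.exists_isMaxCliqueIn_notMem (p := (i₁, j)) (by simp [hj])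
  obtain ⟨r, hr, hrj⟩ : ∃ r ∈ R, (r, j) ∉ S := by
    by_contra! h
    exact hjX (Finset.mem_product.2 ⟨hA₁R hi₁, hX.mem_cols_of_forall ⟨i₁, hA₁R hi₁⟩ h⟩)
  exact ⟨r, fun j' hj' => hX.1.2.1 (Finset.mem_product.2 ⟨hr, hB₀C hj'⟩), hrj⟩

theorem exists_col_notMem (hC : IsMaxIntersection S (A₁ ×ˢ B₀)) {i : Fin m} (hi : i ∉ A₁) :
    ∃ c, (∀ i' ∈ A₁, (i', c) ∈ S) ∧ (i, c) ∉ S := by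
  obtain ⟨-, ⟨j₀, hj₀⟩⟩ := Finset.nonempty_product.1 hC.nonempty
  obtain ⟨R, C, hX, hA₁R, hB₀C, hiX⟩ := hC.exists_isMaxCliqueIn_notMem (p := (i, j₀)) (by simp [hi])
  obtain ⟨c, hc, hic⟩ : ∃ c ∈ C, (i, c) ∉ S := by
    by_contra! h
    exact hiX (Finset.mem_product.2 ⟨hX.mem_rows_of_forall ⟨j₀, hB₀C hj₀⟩ h, hB₀C hj₀⟩)
  exact ⟨c, fun i' hi' => hX.1.2.1 (Finset.mem_product.2 ⟨hA₁R hi', hc⟩), hic⟩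

theorem rows_subset_of_forall_mem (hC : IsMaxIntersection S (A₁ ×ˢ B₀)) {R : Finset (Fin m)}
    {C : Finset (Fin n)} (hX : IsMaxCliqueIn S (R ×ˢ C)) (hA₁R : A₁ ⊆ R) (hB₀C : B₀ ⊆ C)
    {i : Fin m} (hiR : i ∉ R) (hiB : ∀ j ∈ B₀, (i, j) ∈ S) : R ⊆ A₁ := by
  obtain ⟨-, ⟨j₀, hj₀⟩⟩ := Finset.nonempty_product.1 hC.nonempty
  have hY : IsCliqueIn S (insert i R ×ˢ B₀) := by
    refine isCliqueIn_product (Finset.insert_nonempty i R) ⟨j₀, hj₀⟩ fun i' hi' j hj => ?_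
    rcases Finset.mem_insert.1 hi' with rfl | hi'
    · exact hiB j hj
    · exact hX.1.2.1 (Finset.mem_product.2 ⟨hi', hB₀C hj⟩)
  have hYX : ¬ insert i R ×ˢ B₀ ⊆ R ×ˢ C := fun h =>
    hiR (Finset.left_subset_of_product_subset h ⟨j₀, hj₀⟩ (Finset.mem_insert_self i R))
  have hXY := hC.inter_subset hX (Finset.product_subset_product hA₁R hB₀C) hY
    (Finset.product_subset_product (hA₁R.trans (Finset.subset_insert i R)) subset_rfl) hYX
  intro r hr
  exact (Finset.mem_product.1 (hXY (Finset.mem_inter.2 ⟨Finset.mk_mem_product hr (hB₀C hj₀),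
    Finset.mk_mem_product (Finset.mem_insert_of_mem hr) hj₀⟩))).1

theorem forall_mem_row_of_adj_outside (hG : ¬ HasInducedCopy doubleSquare (graphOf S))
    (hC : IsMaxIntersection S (A₁ ×ˢ B₀)) (hi₁ : i₁ ∈ A₁) (hj₀ : j₀ ∈ B₀) (hj₁ : j₁ ∉ B₀)
    (h₁₁ : (i₁, j₁) ∈ S) (h₂₀ : (i₂, j₀) ∈ S) (h₂₁ : (i₂, j₁) ∈ S) :
    ∀ j ∈ B₀, (i₂, j) ∈ S := by
  intro j hj
  by_contra h₂j
  obtain ⟨r, hrB, hrj₁⟩ := hC.exists_row_notMem hj₁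
  have hAB := hC.subset
  exact hG (hasInducedCopy_doubleSquare (hrB j hj) (hrB j₀ hj₀)
    (hAB (Finset.mk_mem_product hi₁ hj)) (hAB (Finset.mk_mem_product hi₁ hj₀)) h₁₁ h₂₀ h₂₁
    hrj₁ h₂j)

theorem forall_mem_col_of_adj_outside (hG : ¬ HasInducedCopy doubleSquare (graphOf S))
    (hC : IsMaxIntersection S (A₁ ×ˢ B₀)) (hi₁ : i₁ ∈ A₁) (hj₀ : j₀ ∈ B₀) (hi₂ : i₂ ∉ A₁)
    (h₁₁ : (i₁, j₁) ∈ S) (h₂₀ : (i₂, j₀) ∈ S) (h₂₁ : (i₂, j₁) ∈ S) :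
    ∀ i ∈ A₁, (i, j₁) ∈ S := by
  intro i hi
  by_contra hij₁
  obtain ⟨c, hcA, h₂c⟩ := hC.exists_col_notMem hi₂
  have hAB := hC.subset
  exact hG (hasInducedCopy_doubleSquare (hcA i hi) (hAB (Finset.mk_mem_product hi hj₀))
    (hcA i₁ hi₁) (hAB (Finset.mk_mem_product hi₁ hj₀)) h₁₁ h₂₀ h₂₁ hij₁ h₂c)

/-- Double-square freeness makes `i₂` complete to `B₀` and `j₁` complete to `A₁`; a maximal
clique through `A₁ ×ˢ B₀` avoiding `i₂` then has rows `A₁`, hence contains `j₁`, and so meets the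
clique `(A₁ + i₂) ×ˢ (B₀ + j₁)` outside `A₁ ×ˢ B₀`. -/
theorem notMem_of_adj_outside (hG : ¬ HasInducedCopy doubleSquare (graphOf S))
    (hC : IsMaxIntersection S (A₁ ×ˢ B₀)) (hi₁ : i₁ ∈ A₁) (hj₀ : j₀ ∈ B₀) (hi₂ : i₂ ∉ A₁)
    (hj₁ : j₁ ∉ B₀) (h₁₁ : (i₁, j₁) ∈ S) (h₂₀ : (i₂, j₀) ∈ S) : (i₂, j₁) ∉ S := by
  intro h₂₁
  have h₂B := hC.forall_mem_row_of_adj_outside hG hi₁ hj₀ hj₁ h₁₁ h₂₀ h₂₁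
  have hAj₁ := hC.forall_mem_col_of_adj_outside hG hi₁ hj₀ hi₂ h₁₁ h₂₀ h₂₁
  obtain ⟨R, C, hX, hA₁R, hB₀C, h₂X⟩ :=
    hC.exists_isMaxCliqueIn_notMem (p := (i₂, j₀)) (by simp [hi₂])
  have hi₂R : i₂ ∉ R := fun h => h₂X (Finset.mk_mem_product h (hB₀C hj₀))
  have hRA₁ := hC.rows_subset_of_forall_mem hX hA₁R hB₀C hi₂R h₂B
  have hj₁C : j₁ ∈ C := hX.mem_cols_of_forall ⟨i₁, hA₁R hi₁⟩ fun i hi => hAj₁ i (hRA₁ hi)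
  have hY : IsCliqueIn S (insert i₂ A₁ ×ˢ insert j₁ B₀) := by
    refine isCliqueIn_product (Finset.insert_nonempty _ _) (Finset.insert_nonempty _ _)
      fun i hi j hj => ?_
    rcases Finset.mem_insert.1 hi with rfl | hi <;> rcases Finset.mem_insert.1 hj with rfl | hj
    · exact h₂₁
    · exact h₂B j hj
    · exact hAj₁ i hi
    · exact hC.subset (Finset.mk_mem_product hi hj)
  have hYX : ¬ insert i₂ A₁ ×ˢ insert j₁ B₀ ⊆ R ×ˢ C := fun h => h₂X
    (h (Finset.mk_mem_product (Finset.mem_insert_self _ _) (Finset.mem_insert_of_mem hj₀)))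
  have hXY := hC.inter_subset hX (Finset.product_subset_product hA₁R hB₀C) hY
    (Finset.product_subset_product (Finset.subset_insert _ _) (Finset.subset_insert _ _)) hYX
  exact hj₁ (Finset.mem_product.1 (hXY (Finset.mem_inter.2 ⟨Finset.mk_mem_product (hA₁R hi₁) hj₁C,
    Finset.mk_mem_product (Finset.mem_insert_of_mem hi₁) (Finset.mem_insert_self _ _)⟩))).2

end IsMaxIntersection

namespace IsLayering

variable {m n : ℕ} {S : Finset (Fin m × Fin n)} {A : ℕ → Finset (Fin m)} {B : ℕ → Finset (Fin n)}

theorem of_eq_filter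
    (hA : ∀ k, 2 ≤ k →
      A k = Finset.univ.filter fun i => i ∉ A (k - 1) ∧ ∃ j ∈ B (k - 1), (i, j) ∈ S)
    (hB : ∀ k, 1 ≤ k →
      B k = Finset.univ.filter fun j => j ∉ B (k - 1) ∧ ∃ i ∈ A k, (i, j) ∈ S) :
    IsLayering S A B where
  mem_A_succ {k} hk i := by simp [hA (k + 1) (by omega)]
  mem_B_succ {k} j := by simp [hB (k + 1) (by omega)]

theorem disjoint_B_zero_B_two (hL : IsLayering S A B)
    (hG : ¬ HasInducedCopy doubleSquare (graphOf S)) (hC : IsMaxIntersection S (A 1 ×ˢ B 0)) :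
    Disjoint (B 0) (B 2) := by
  refine Finset.disjoint_left.2 fun j hj₀ hj₂ => ?_
  obtain ⟨-, i₂, hi₂, h₂₀⟩ := hL.mem_B_succ.1 hj₂
  obtain ⟨hi₂A, j₁, hj₁, h₂₁⟩ := (hL.mem_A_succ le_rfl).1 hi₂
  obtain ⟨hj₁B, i₁, hi₁, h₁₁⟩ := hL.mem_B_succ.1 hj₁
  exact hC.notMem_of_adj_outside hG hi₁ hj₀ hi₂A hj₁B h₁₁ h₂₀ h₂₁

theorem disjoint_B_zero_of_three_le (hL : IsLayering S A B)
    (hG : ∀ ℓ, 6 ≤ ℓ → ¬ HasInducedCopy (cycleGraph ℓ) (graphOf S)) (hAB : A 1 ×ˢ B 0 ⊆ S)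
    {d : ℕ} (hd : 3 ≤ d) (h : LayersDisjointBelow A B d) : Disjoint (B 0) (B d) := by
  refine Finset.disjoint_left.2 fun j hj₀ hjd => ?_
  obtain ⟨I, J, rfl, hpath⟩ := hL.exists_path (by omega) hjd
  refine hG (2 * d) (by omega) (hasInducedCopy_cycleGraph_graphOf (by omega) I J
    (fun s ⟨hs₁, hs₂⟩ s' ⟨hs₁', hs₂'⟩ hss' => ?_) (fun t ⟨ht₁, ht₂⟩ t' ⟨ht₁', ht₂'⟩ htt' => ?_)
    fun s t ⟨hs₁, hs₂⟩ ⟨ht₁, ht₂⟩ => ⟨fun hst => ?_, ?_⟩)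
  · exact h.eq_of_mem_A hs₁ hs₁' (hpath s hs₁ hs₂).1 (hss' ▸ (hpath s' hs₁' hs₂').1)
      (by omega) (by omega)
  · exact h.eq_of_mem_B (hpath t ht₁ ht₂).2.1 (htt' ▸ (hpath t' ht₁' ht₂').2.1)
      (by omega) (by omega)
  · obtain ⟨s, rfl⟩ := Nat.exists_eq_add_of_le' hs₁
    have hJt := (hpath t ht₁ ht₂).2.1
    rcases hL.mem_or_mem_B_of_mem_A (hpath _ hs₁ hs₂).1 hst with hJs | hJs
    · by_cases hwrap : s = 0 ∧ t = d
      · exact Or.inr (Or.inr ⟨by omega, hwrap.2⟩)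
      · have := h.eq_of_mem_B hJt hJs (by omega) (by omega)
        omega
    · have := h.eq_of_mem_B hJt hJs (by omega) (by omega)
      omega
  · rintro (rfl | rfl | ⟨rfl, rfl⟩)
    · exact (hpath t ht₁ ht₂).2.2.1
    · exact (hpath t ht₁ ht₂).2.2.2 (by omega)
    · exact hAB (Finset.mk_mem_product (hpath 1 le_rfl hs₂).1 hj₀)

end IsLayering

/-- Let `G_S` be doubly chordal bipartite and `C = A 1 ×ˢ B 0 ∈ Int(S)`, with
the sets `A k` (for `k ≥ 2`) and `B k` (for `k ≥ 1`) defined by the recursions of the paper.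
Then the sets `A 1, A 2, A 3, …` are pairwise disjoint, and consequently `A k` and `B k` are
empty for all sufficiently large `k`. -/
theorem stmt12 {m n : ℕ} (S : Finset (Fin m × Fin n))
    (hG : DoublyChordalBipartite (graphOf S))
    (A : ℕ → Finset (Fin m)) (B : ℕ → Finset (Fin n))
    (hC : IsMaxIntersection S (A 1 ×ˢ B 0))
    (hA : ∀ k, 2 ≤ k →
      A k = Finset.univ.filter fun i => i ∉ A (k - 1) ∧ ∃ j ∈ B (k - 1), (i, j) ∈ S)
    (hB : ∀ k, 1 ≤ k →
      B k = Finset.univ.filter fun j => j ∉ B (k - 1) ∧ ∃ i ∈ A k, (i, j) ∈ S) :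
    (∀ k l, 1 ≤ k → 1 ≤ l → k ≠ l → Disjoint (A k) (A l)) ∧
    ∃ K, ∀ k, K ≤ k → A k = ∅ ∧ B k = ∅ := by
  have hL : IsLayering S A B := .of_eq_filter hA hB
  have hB₀ : ∀ d, 2 ≤ d → LayersDisjointBelow A B d → Disjoint (B 0) (B d) := by
    intro d hd h
    rcases hd.eq_or_lt with rfl | hd
    · exact hL.disjoint_B_zero_B_two hG.2 hC
    · exact hL.disjoint_B_zero_of_three_le hG.1 hC.subset hd h
  have hdisj : ∀ k l, k < l → Disjoint (A (k + 1)) (A (l + 1)) := fun k l hkl =>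
    (hL.disjoint_of_lt hB₀ hkl).2
  refine ⟨fun k l hk hl hkl => ?_, hL.exists_eventually_empty hdisj⟩
  obtain ⟨k, rfl⟩ := Nat.exists_eq_add_of_le' hk
  obtain ⟨l, rfl⟩ := Nat.exists_eq_add_of_le' hl
  rcases Nat.lt_or_gt_of_ne hkl with h | h
  · exact hdisj k l (by omega)
  · exact (hdisj l k (by omega)).symm
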